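/- arXiv:2106.03668 — 4 statements merged into one kernel-verified Lean document; each statement's English description precedes it below -/
import Mathlib

section
/- Let T = D ∘ S where D, S: ℝⁿ → ℝⁿ, suppose Fix(D) ∩ Fix(S) is nonempty, and suppose T is a contraction with constant λ ∈ (0,1) over the range Im(D) of D (i.e., ‖T(x) - T(z)‖ ≤ λ‖x - z‖ for all x, z ∈ Im(D)). If moreover Fix(D) ∩ Fix(S) ⊆ Im(D), then Fix(T) ∩ Im(D) = Fix(D) ∩ Fix(S). -/
/-! A contraction over `Im(D)` has at most one fixed point there, since two such points
`x, y` satisfy `‖x - y‖ ≤ λ ‖x - y‖`. Every common fixed point of `D` and `S` is a fixed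
point of `D ∘ S` lying in `Im(D)`, and one exists; hence both sets are the same singleton. -/

open Function

theorem Set.Subsingleton.eq_of_subset_of_nonempty {α : Type*} {s t : Set α}
    (ht : t.Subsingleton) (hst : s ⊆ t) (hs : s.Nonempty) : t = s := by
  obtain ⟨y, hy⟩ := hs
  rw [ht.eq_singleton_of_mem (hst hy), (ht.anti hst).eq_singleton_of_mem hy]

theorem eq_of_dist_le_mul_self {α : Type*} [MetricSpace α] {x y : α} {lam : ℝ}
    (hlam : lam < 1) (h : dist x y ≤ lam * dist x y) : x = y := by
  refine dist_le_zero.mp ?_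
  nlinarith [dist_nonneg (x := x) (y := y)]

theorem subsingleton_fixedPoints_inter_of_dist_le {α : Type*} [MetricSpace α] {f : α → α}
    {s : Set α} {lam : ℝ} (hlam : lam < 1)
    (hf : ∀ x ∈ s, ∀ z ∈ s, dist (f x) (f z) ≤ lam * dist x z) :
    (fixedPoints f ∩ s).Subsingleton := by
  rintro x ⟨hfx, hxs⟩ y ⟨hfy, hys⟩
  apply eq_of_dist_le_mul_self hlam
  simpa only [hfx.eq, hfy.eq] using hf x hxs y hys

theorem fixedPoints_comp_contraction_general {n : ℕ}
    (D S : EuclideanSpace ℝ (Fin n) → EuclideanSpace ℝ (Fin n))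
    (hne : ({x | D x = x} ∩ {x | S x = x}).Nonempty)
    (lam : ℝ) (hlam1 : lam < 1)
    (hcontr : ∀ x ∈ Set.range D, ∀ z ∈ Set.range D,
      ‖D (S x) - D (S z)‖ ≤ lam * ‖x - z‖)
    (hsub : ({x | D x = x} ∩ {x | S x = x}) ⊆ Set.range D) :
    {x | D (S x) = x} ∩ Set.range D = {x | D x = x} ∩ {x | S x = x} := by
  have hunique : (fixedPoints (D ∘ S) ∩ Set.range D).Subsingleton :=
    subsingleton_fixedPoints_inter_of_dist_le hlam1
      (by simpa only [dist_eq_norm, comp_apply] using hcontr)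
  exact hunique.eq_of_subset_of_nonempty (fun x hx => ⟨IsFixedPt.comp hx.1 hx.2, hsub hx⟩) hne

/-- Fixed points of a composition `T = D ∘ S` that is a contraction over `Im(D)`:
if `Fix(D) ∩ Fix(S)` is nonempty and contained in `Im(D)`, then
`Fix(T) ∩ Im(D) = Fix(D) ∩ Fix(S)`. -/
theorem fixedPoints_comp_contraction {n : ℕ}
    (D S : EuclideanSpace ℝ (Fin n) → EuclideanSpace ℝ (Fin n))
    (hne : ({x | D x = x} ∩ {x | S x = x}).Nonempty)
    (lam : ℝ) (hlam0 : 0 < lam) (hlam1 : lam < 1)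
    (hcontr : ∀ x ∈ Set.range D, ∀ z ∈ Set.range D,
      ‖D (S x) - D (S z)‖ ≤ lam * ‖x - z‖)
    (hsub : ({x | D x = x} ∩ {x | S x = x}) ⊆ Set.range D) :
    {x | D (S x) = x} ∩ Set.range D = {x | D x = x} ∩ {x | S x = x} :=
  fixedPoints_comp_contraction_general D S hne lam hlam1 hcontr hsub
end

section
/- Let g: ℝⁿ → ℝ be convex and differentiable with λ-Lipschitz gradient, D: ℝⁿ → ℝⁿ nonexpansive with residual R = I - D, and τ > 0. Define G = ∇g + τR. If there exists z ∈ ℝⁿ with ∇g(z) = 0 and R(z) = 0, then for any x ∈ ℝⁿ, G(x) = 0 implies ∇g(x) = 0 and R(x) = 0. Consequently Zer(G) = Zer(∇g) ∩ Zer(R). -/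
/-!
Pair `G x = ∇g x + τ R x` with `x - z`. Convexity makes `∇g` monotone, so `⟪∇g x, x - z⟫ ≥ 0`
because `∇g z = 0`; nonexpansiveness of `D` makes `R` `1/2`-cocoercive, so
`⟪R x, x - z⟫ ≥ ‖R x‖² / 2` because `R z = 0`. If `G x = 0` the two pairings sum to zero,
which forces `R x = 0`, and then `∇g x = -τ R x = 0`.
-/

open RealInnerProductSpace AffineMap

theorem ConvexOn.fderiv_sub_le {E : Type*} [NormedAddCommGroup E] [NormedSpace ℝ E]
    {s : Set E} {g : E → ℝ} {g' : E →L[ℝ] ℝ} {x y : E} (hconv : ConvexOn ℝ s g)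
    (hx : x ∈ s) (hy : y ∈ s) (hg : HasFDerivAt g g' x) :
    g' (y - x) ≤ g y - g x := by
  let ℓ : ℝ →ᵃ[ℝ] E := lineMap x y
  have hline : ConvexOn ℝ (ℓ ⁻¹' s) (g ∘ ℓ) := hconv.comp_affineMap ℓ
  have hderiv : HasDerivAt (g ∘ ℓ) (g' (y - x)) 0 :=
    HasFDerivAt.comp_hasDerivAt (0 : ℝ) (by simpa [ℓ] using hg) hasDerivAt_lineMap
  simpa [ℓ, slope_def_field] using
    hline.le_slope_of_hasDerivAt (by simpa [ℓ] using hx) (by simpa [ℓ] using hy) one_pos hderiv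

theorem ConvexOn.inner_gradient_sub_le {F : Type*} [NormedAddCommGroup F] [InnerProductSpace ℝ F]
    [CompleteSpace F] {s : Set F} {g : F → ℝ} {g' x y : F} (hconv : ConvexOn ℝ s g)
    (hx : x ∈ s) (hy : y ∈ s) (hg : HasGradientAt g g' x) :
    ⟪g', y - x⟫ ≤ g y - g x := by
  simpa using hconv.fderiv_sub_le hx hy hg.hasFDerivAt

theorem ConvexOn.inner_gradient_sub_gradient_nonneg {F : Type*} [NormedAddCommGroup F]
    [InnerProductSpace ℝ F] [CompleteSpace F] {s : Set F} {g : F → ℝ} {gx gy x y : F}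
    (hconv : ConvexOn ℝ s g) (hx : x ∈ s) (hy : y ∈ s)
    (hgx : HasGradientAt g gx x) (hgy : HasGradientAt g gy y) :
    0 ≤ ⟪gx - gy, x - y⟫ := by
  have h₁ := hconv.inner_gradient_sub_le hx hy hgx
  have h₂ := hconv.inner_gradient_sub_le hy hx hgy
  rw [← neg_sub x y, inner_neg_right] at h₁
  rw [inner_sub_left]
  linarith

theorem sq_norm_sub_sub_le_two_inner_of_norm_sub_le {F : Type*} [NormedAddCommGroup F]
    [InnerProductSpace ℝ F] {x y u v : F} (h : ‖u - v‖ ≤ ‖x - y‖) :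
    ‖(x - u) - (y - v)‖ ^ 2 ≤ 2 * ⟪(x - u) - (y - v), x - y⟫ := by
  have hsplit : u - v = (x - y) - ((x - u) - (y - v)) := by abel
  have hsq := pow_le_pow_left₀ (norm_nonneg _) h 2
  rw [hsplit, norm_sub_sq_real, real_inner_comm] at hsq
  linarith

theorem eq_zero_of_add_smul_eq_zero_of_inner_nonneg {F : Type*} [NormedAddCommGroup F]
    [InnerProductSpace ℝ F] {a b w : F} {τ : ℝ} (hτ : 0 < τ)
    (ha : 0 ≤ ⟪a, w⟫) (hb : ‖b‖ ^ 2 ≤ 2 * ⟪b, w⟫) (hab : a + τ • b = 0) :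
    a = 0 ∧ b = 0 := by
  have hsum : ⟪a, w⟫ + τ * ⟪b, w⟫ = 0 := by
    rw [← real_inner_smul_left, ← inner_add_left, hab, inner_zero_left]
  have hb0 : b = 0 := by
    rw [← norm_eq_zero, ← sq_eq_zero_iff]
    nlinarith [sq_nonneg ‖b‖]
  exact ⟨by simpa [hb0] using hab, hb0⟩

theorem red_zeros_eq_common_zeros_general {n : ℕ}
    (g : EuclideanSpace ℝ (Fin n) → ℝ) (hg : Differentiable ℝ g)
    (hconv : ConvexOn ℝ Set.univ g)
    (D : EuclideanSpace ℝ (Fin n) → EuclideanSpace ℝ (Fin n))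
    (hD : ∀ x z, ‖D x - D z‖ ≤ ‖x - z‖)
    (R : EuclideanSpace ℝ (Fin n) → EuclideanSpace ℝ (Fin n))
    (hR : ∀ x, R x = x - D x)
    (τ : ℝ) (hτ : 0 < τ)
    (z : EuclideanSpace ℝ (Fin n)) (hzg : gradient g z = 0) (hzR : R z = 0) :
    (∀ x, gradient g x + τ • R x = 0 → gradient g x = 0 ∧ R x = 0) ∧
    {x | gradient g x + τ • R x = 0} = {x | gradient g x = 0} ∩ {x | R x = 0} := by
  have hcommon : ∀ x, gradient g x + τ • R x = 0 → gradient g x = 0 ∧ R x = 0 := by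
    intro x hx
    have hmono : 0 ≤ ⟪gradient g x, x - z⟫ := by
      simpa [hzg] using hconv.inner_gradient_sub_gradient_nonneg (Set.mem_univ x)
        (Set.mem_univ z) (hg x).hasGradientAt (hg z).hasGradientAt
    have hcoco : ‖R x‖ ^ 2 ≤ 2 * ⟪R x, x - z⟫ := by
      simpa [← hR, hzR] using sq_norm_sub_sub_le_two_inner_of_norm_sub_le (hD x z)
    exact eq_zero_of_add_smul_eq_zero_of_inner_nonneg hτ hmono hcoco hx
  refine ⟨hcommon, Set.ext fun x => ⟨hcommon x, ?_⟩⟩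
  rintro ⟨hgx : gradient g x = 0, hRx : R x = 0⟩
  simp [hgx, hRx]

/-- Zeros of the RED operator `G = ∇g + τR`: if `∇g` and `R = I - D` have a common zero,
`g` is convex with Lipschitz gradient, and `D` is nonexpansive, then any zero of `G` is a
common zero of `∇g` and `R`; hence `Zer(G) = Zer(∇g) ∩ Zer(R)`. -/
theorem red_zeros_eq_common_zeros {n : ℕ}
    (g : EuclideanSpace ℝ (Fin n) → ℝ) (hg : Differentiable ℝ g)
    (hconv : ConvexOn ℝ Set.univ g)
    (lam : ℝ) (hlam : 0 < lam)
    (hLip : ∀ x z, ‖gradient g x - gradient g z‖ ≤ lam * ‖x - z‖)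
    (D : EuclideanSpace ℝ (Fin n) → EuclideanSpace ℝ (Fin n))
    (hD : ∀ x z, ‖D x - D z‖ ≤ ‖x - z‖)
    (R : EuclideanSpace ℝ (Fin n) → EuclideanSpace ℝ (Fin n))
    (hR : ∀ x, R x = x - D x)
    (τ : ℝ) (hτ : 0 < τ)
    (z : EuclideanSpace ℝ (Fin n)) (hzg : gradient g z = 0) (hzR : R z = 0) :
    (∀ x, gradient g x + τ • R x = 0 → gradient g x = 0 ∧ R x = 0) ∧
    {x | gradient g x + τ • R x = 0} = {x | gradient g x = 0} ∩ {x | R x = 0} :=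
  red_zeros_eq_common_zeros_general g hg hconv D hD R hR τ hτ z hzg hzR
end

section
/- If g: ℝⁿ → ℝ is convex and differentiable and ∇g is λ-Lipschitz continuous (λ > 0), then ∇g is (1/λ)-cocoercive: ⟨∇g(x) - ∇g(z), x - z⟩ ≥ (1/λ)‖∇g(x) - ∇g(z)‖² for all x, z ∈ ℝⁿ. -/
/-!
Convexity bounds `g` below by its tangent planes, and the `λ`-Lipschitz gradient bounds it above
by the quadratic `g y + ⟪∇g y, z - y⟫ + λ/2 ‖z - y‖²`. Comparing the two bounds at
`w = z - λ⁻¹ (∇g z - ∇g x)`, the minimiser of the quadratic upper bound of `g - ⟪∇g x, ·⟫`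
around `z`, gives `g z ≥ g x + ⟪∇g x, z - x⟫ + ‖∇g z - ∇g x‖² / (2λ)`; adding this to the same
inequality with `x` and `z` exchanged yields cocoercivity.
-/

open RealInnerProductSpace

section

variable {E : Type*} [NormedAddCommGroup E] [InnerProductSpace ℝ E] [CompleteSpace E]
  {g : E → ℝ}

theorem HasGradientAt.hasDerivAt_comp_add_smul {g' a v : E} {t : ℝ}
    (h : HasGradientAt g g' (a + t • v)) :
    HasDerivAt (fun s : ℝ => g (a + s • v)) ⟪g', v⟫ t := by
  have hline : HasDerivAt (fun s : ℝ => a + s • v) v t := by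
    simpa using ((hasDerivAt_id t).smul_const v).const_add a
  simpa [Function.comp_def] using h.hasFDerivAt.comp_hasDerivAt t hline

theorem ConvexOn.add_inner_gradient_le {S : Set E} (hconv : ConvexOn ℝ S g) {x y : E}
    (hx : x ∈ S) (hy : y ∈ S) (hg : DifferentiableAt ℝ g x) :
    g x + ⟪gradient g x, y - x⟫ ≤ g y := by
  have hline : ConvexOn ℝ {t : ℝ | x + t • (y - x) ∈ S} (fun t : ℝ => g (x + t • (y - x))) := by
    have := hconv.comp_affineMap (AffineMap.lineMap x y : ℝ →ᵃ[ℝ] E)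
    simpa only [Function.comp_def, Set.preimage, AffineMap.lineMap_apply_module', add_comm]
      using this
  have hder : HasDerivAt (fun t : ℝ => g (x + t • (y - x))) ⟪gradient g x, y - x⟫ 0 :=
    HasGradientAt.hasDerivAt_comp_add_smul (by rw [zero_smul, add_zero]; exact hg.hasGradientAt)
  have := hline.le_slope_of_hasDerivAt (by simpa using hx) (by simpa using hy) one_pos hder
  simp only [slope_def_field, zero_smul, add_zero, one_smul, add_sub_cancel, sub_zero,
    div_one] at this
  linarith

theorem inner_gradient_add_smul_sub_le {lam : ℝ}
    (hLip : ∀ x z, ‖gradient g x - gradient g z‖ ≤ lam * ‖x - z‖) (y v : E) {t : ℝ}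
    (ht : 0 ≤ t) :
    ⟪gradient g (y + t • v) - gradient g y, v⟫ ≤ lam * t * ‖v‖ ^ 2 :=
  calc ⟪gradient g (y + t • v) - gradient g y, v⟫
      ≤ ‖gradient g (y + t • v) - gradient g y‖ * ‖v‖ := real_inner_le_norm _ _
    _ ≤ lam * ‖(y + t • v) - y‖ * ‖v‖ := by gcongr; exact hLip _ _
    _ = lam * t * ‖v‖ ^ 2 := by
      rw [add_sub_cancel_left, norm_smul, Real.norm_of_nonneg ht]; ring

theorem le_add_inner_gradient_add_sq_norm (hg : Differentiable ℝ g) {lam : ℝ}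
    (hLip : ∀ x z, ‖gradient g x - gradient g z‖ ≤ lam * ‖x - z‖) (y z : E) :
    g z ≤ g y + ⟪gradient g y, z - y⟫ + lam / 2 * ‖z - y‖ ^ 2 := by
  set v := z - y
  set φ : ℝ → ℝ := fun t => g (y + t • v) - t * ⟪gradient g y, v⟫ - lam / 2 * t ^ 2 * ‖v‖ ^ 2
  have hφ : ∀ t, HasDerivAt φ
      (⟪gradient g (y + t • v), v⟫ - ⟪gradient g y, v⟫ - lam * t * ‖v‖ ^ 2) t := by
    intro t
    have hline := ((hg (y + t • v)).hasGradientAt).hasDerivAt_comp_add_smul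
    have hlin := (hasDerivAt_id t).mul_const ⟪gradient g y, v⟫
    have hquad := ((hasDerivAt_pow 2 t).const_mul (lam / 2)).mul_const (‖v‖ ^ 2)
    refine ((hline.sub hlin).sub hquad).congr_deriv ?_
    push_cast
    ring
  have hanti : AntitoneOn φ (Set.Icc 0 1) := by
    refine antitoneOn_of_deriv_nonpos (convex_Icc 0 1)
      (fun t _ => (hφ t).continuousAt.continuousWithinAt)
      (fun t _ => (hφ t).differentiableAt.differentiableWithinAt) fun t ht => ?_
    rw [interior_Icc] at ht
    have := inner_gradient_add_smul_sub_le hLip y v ht.1.le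
    rw [inner_sub_left] at this
    rw [(hφ t).deriv]
    linarith
  have h0 : φ 0 = g y := by simp [φ]
  have h1 : φ 1 = g z - ⟪gradient g y, v⟫ - lam / 2 * ‖v‖ ^ 2 := by simp [φ, v]
  linarith [hanti (by simp) (by simp) zero_le_one]

theorem ConvexOn.add_inner_gradient_add_sq_norm_le (hconv : ConvexOn ℝ Set.univ g)
    (hg : Differentiable ℝ g) {lam : ℝ}
    (hLip : ∀ x z, ‖gradient g x - gradient g z‖ ≤ lam * ‖x - z‖) (x z : E) :
    g x + ⟪gradient g x, z - x⟫ + 1 / (2 * lam) * ‖gradient g z - gradient g x‖ ^ 2 ≤ g z := by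
  set u := gradient g z - gradient g x
  set w := z - lam⁻¹ • u
  have hlower := hconv.add_inner_gradient_le (Set.mem_univ x) (Set.mem_univ w) (hg x)
  have hupper := le_add_inner_gradient_add_sq_norm hg hLip z w
  have hwz : w - z = -(lam⁻¹ • u) := by simp [w]
  have hsplit : ⟪gradient g x, w - x⟫ = ⟪gradient g x, z - x⟫ + ⟪gradient g x, w - z⟫ := by
    rw [← inner_add_right, sub_add_sub_cancel']
  have hstep : ⟪gradient g z, w - z⟫ = ⟪gradient g x, w - z⟫ + ⟪u, w - z⟫ := by
    rw [← inner_add_left, add_sub_cancel]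
  have hu : ⟪u, w - z⟫ = -2 * (1 / (2 * lam) * ‖u‖ ^ 2) := by
    rw [hwz, inner_neg_right, real_inner_smul_right, real_inner_self_eq_norm_sq]
    ring
  have hnorm : lam / 2 * ‖w - z‖ ^ 2 = 1 / (2 * lam) * ‖u‖ ^ 2 := by
    rw [hwz, norm_neg, norm_smul, mul_pow, Real.norm_eq_abs, sq_abs]
    field_simp
  linarith

end

theorem baillon_haddad_cocoercive_general {n : ℕ}
    (g : EuclideanSpace ℝ (Fin n) → ℝ) (hg : Differentiable ℝ g)
    (hconv : ConvexOn ℝ Set.univ g)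
    (lam : ℝ)
    (hLip : ∀ x z, ‖gradient g x - gradient g z‖ ≤ lam * ‖x - z‖) :
    ∀ x z, ⟪gradient g x - gradient g z, x - z⟫ ≥
      (1 / lam) * ‖gradient g x - gradient g z‖ ^ 2 := by
  intro x z
  have hxz := hconv.add_inner_gradient_add_sq_norm_le hg hLip x z
  have hzx := hconv.add_inner_gradient_add_sq_norm_le hg hLip z x
  rw [norm_sub_rev] at hxz
  have hinner : ⟪gradient g x - gradient g z, x - z⟫ =
      -⟪gradient g x, z - x⟫ - ⟪gradient g z, x - z⟫ := by
    rw [inner_sub_left, ← inner_neg_right, neg_sub]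
  have hconst : 1 / lam = 2 * (1 / (2 * lam)) := by ring
  rw [hinner, hconst]
  linarith

/-- Baillon–Haddad: a convex differentiable function with `λ`-Lipschitz gradient has a
`(1/λ)`-cocoercive gradient. -/
theorem baillon_haddad_cocoercive {n : ℕ}
    (g : EuclideanSpace ℝ (Fin n) → ℝ) (hg : Differentiable ℝ g)
    (hconv : ConvexOn ℝ Set.univ g)
    (lam : ℝ) (hlam : 0 < lam)
    (hLip : ∀ x z, ‖gradient g x - gradient g z‖ ≤ lam * ‖x - z‖) :
    ∀ x z, ⟪gradient g x - gradient g z, x - z⟫ ≥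
      (1 / lam) * ‖gradient g x - gradient g z‖ ^ 2 :=
  baillon_haddad_cocoercive_general g hg hconv lam hLip
end

section
/- Let A ∈ ℝ^{m×n} satisfy S-REC with constant μ > 0 over a set containing x̄ and x̂, let y = Ax* + e for some x* ∈ ℝⁿ and e ∈ ℝᵐ, and suppose ‖y - Ax̄‖ ≤ ‖y - Ax̂‖ + η for some η ≥ 0. Then ‖x̄ - x̂‖ ≤ (2/√μ)‖A(x* - x̂)‖ + (2/√μ)‖e‖ + η/√μ. -/
section SREC

variable {E F : Type*} [SeminormedAddCommGroup E] [SeminormedAddCommGroup F]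

/-- Set-restricted eigenvalue condition (S-REC). -/
def SREC (f : E → F) (μ : ℝ) (X : Set E) : Prop :=
  ∀ x ∈ X, ∀ z ∈ X, ‖f x - f z‖ ^ 2 ≥ μ * ‖x - z‖ ^ 2

theorem SREC.sqrt_mul_norm_sub_le {f : E → F} {μ : ℝ} {X : Set E} (hf : SREC f μ X)
    {x z : E} (hx : x ∈ X) (hz : z ∈ X) :
    √μ * ‖x - z‖ ≤ ‖f x - f z‖ :=
  calc √μ * ‖x - z‖ = √(μ * ‖x - z‖ ^ 2) := by
        rw [Real.sqrt_mul' μ (sq_nonneg _), Real.sqrt_sq (norm_nonneg _)]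
    _ ≤ √(‖f x - f z‖ ^ 2) := Real.sqrt_le_sqrt (hf x hx z hz)
    _ = ‖f x - f z‖ := Real.sqrt_sq (norm_nonneg _)

theorem SREC.sqrt_mul_norm_sub_le_of_norm_sub_le {f : E → F} {μ : ℝ} {X : Set E}
    (hf : SREC f μ X) {xbar xhat : E} (hxbar : xbar ∈ X) (hxhat : xhat ∈ X) {y : F} {η : ℝ}
    (hbound : ‖y - f xbar‖ ≤ ‖y - f xhat‖ + η) :
    √μ * ‖xbar - xhat‖ ≤ 2 * ‖y - f xhat‖ + η := by
  have htriangle : ‖f xbar - f xhat‖ ≤ ‖y - f xbar‖ + ‖y - f xhat‖ := by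
    simpa only [dist_eq_norm] using dist_triangle_left (f xbar) (f xhat) y
  linarith [hf.sqrt_mul_norm_sub_le hxbar hxhat]

end SREC

theorem norm_sub_map_le_norm_map_sub_add_norm {E F : Type*} [AddCommGroup E]
    [SeminormedAddCommGroup F] (f : E →+ F) (xstar x : E) (e : F) :
    ‖f xstar + e - f x‖ ≤ ‖f (xstar - x)‖ + ‖e‖ := by
  rw [map_sub, add_sub_right_comm]
  exact norm_add_le _ _

theorem srec_recovery_bound_general {m n : ℕ}
    (A : Matrix (Fin m) (Fin n) ℝ) (μ : ℝ) (hμ : 0 < μ)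
    (X : Set (EuclideanSpace ℝ (Fin n)))
    (xbar xhat : EuclideanSpace ℝ (Fin n)) (hxbar : xbar ∈ X) (hxhat : xhat ∈ X)
    (hSREC : ∀ x ∈ X, ∀ z ∈ X,
      ‖Matrix.toEuclideanLin A x - Matrix.toEuclideanLin A z‖ ^ 2 ≥ μ * ‖x - z‖ ^ 2)
    (xstar : EuclideanSpace ℝ (Fin n)) (e y : EuclideanSpace ℝ (Fin m))
    (hy : y = Matrix.toEuclideanLin A xstar + e)
    (η : ℝ)
    (hbound : ‖y - Matrix.toEuclideanLin A xbar‖ ≤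
      ‖y - Matrix.toEuclideanLin A xhat‖ + η) :
    ‖xbar - xhat‖ ≤ (2 / Real.sqrt μ) * ‖Matrix.toEuclideanLin A (xstar - xhat)‖
      + (2 / Real.sqrt μ) * ‖e‖ + η / Real.sqrt μ := by
  set T := Matrix.toEuclideanLin A
  have hrecovery : √μ * ‖xbar - xhat‖ ≤ 2 * ‖y - T xhat‖ + η :=
    SREC.sqrt_mul_norm_sub_le_of_norm_sub_le hSREC hxbar hxhat hbound
  have hresidual : ‖y - T xhat‖ ≤ ‖T (xstar - xhat)‖ + ‖e‖ :=
    hy ▸ norm_sub_map_le_norm_map_sub_add_norm T.toAddMonoidHom xstar xhat e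
  have hsqrt : 0 < √μ := Real.sqrt_pos.mpr hμ
  calc ‖xbar - xhat‖ = √μ * ‖xbar - xhat‖ / √μ := by field_simp
    _ ≤ (2 * ‖T (xstar - xhat)‖ + 2 * ‖e‖ + η) / √μ := by gcongr; linarith
    _ = 2 / √μ * ‖T (xstar - xhat)‖ + 2 / √μ * ‖e‖ + η / √μ := by ring

/-- Recovery bound from S-REC and near-optimal data fidelity. -/
theorem srec_recovery_bound {m n : ℕ}
    (A : Matrix (Fin m) (Fin n) ℝ) (μ : ℝ) (hμ : 0 < μ)
    (X : Set (EuclideanSpace ℝ (Fin n)))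
    (xbar xhat : EuclideanSpace ℝ (Fin n)) (hxbar : xbar ∈ X) (hxhat : xhat ∈ X)
    (hSREC : ∀ x ∈ X, ∀ z ∈ X,
      ‖Matrix.toEuclideanLin A x - Matrix.toEuclideanLin A z‖ ^ 2 ≥ μ * ‖x - z‖ ^ 2)
    (xstar : EuclideanSpace ℝ (Fin n)) (e y : EuclideanSpace ℝ (Fin m))
    (hy : y = Matrix.toEuclideanLin A xstar + e)
    (η : ℝ) (hη : 0 ≤ η)
    (hbound : ‖y - Matrix.toEuclideanLin A xbar‖ ≤
      ‖y - Matrix.toEuclideanLin A xhat‖ + η) :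
    ‖xbar - xhat‖ ≤ (2 / Real.sqrt μ) * ‖Matrix.toEuclideanLin A (xstar - xhat)‖
      + (2 / Real.sqrt μ) * ‖e‖ + η / Real.sqrt μ :=
  srec_recovery_bound_general A μ hμ X xbar xhat hxbar hxhat hSREC xstar e y hy η hbound
end
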